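/- arXiv:2408.05791 — 2 statements merged into one kernel-verified Lean document; each statement's English description precedes it below -/
import Mathlib

section
/- Fix σα > 0, σβ > 0 and z₀ > 0, and for λ > 0 let P(λ) = ∬_{{(a,b) ∈ [0,∞)² : a + b > z₀λ}} (4ab/(σα² σβ²)) · exp(−a²/σα² − b²/σβ²) da db. Then: (1) for every λ > 0, P(λ) ≤ (z₀²λ²/σα² + 1) · exp(−z₀²λ²/(σα² + σβ²)); and (2) there exist c > 0 and λ₀ > 0 such that for all λ ≥ λ₀, P(λ) ≥ c · λ · exp(−z₀²λ²/(σα² + σβ²)). -/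
open MeasureTheory

/-!
Write `A = σα²`, `B = σβ²`, `t = z₀λ`. Conditioning on `|α| = a`, the tail of `|β|` is explicit and
`P(λ) = ∫_{a ≥ 0} ρ_A(a) exp(-max(t - a, 0)² / B) da` with `ρ_A` the Rayleigh density.
For `a ≤ t` the exponent completes to a square,
`a²/A + (t - a)²/B = t²/(A + B) + k (a - μ)²` with `k = (A + B)/(AB)`, `μ = tA/(A + B)`.
Dropping the square bounds the part `a ≤ t` by `(t²/A) exp(-t²/(A + B))`, and the part `a > t`
is `exp(-t²/A)`. Restricting to `a ∈ [μ, μ + 1] ⊆ [0, t]`, where `ρ_A(a) ≥ 2t/(A + B)` and the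
square is at most `k`, gives the lower bound.
-/

open Set Filter Topology Real

noncomputable section

/-- Density of `|z|` for a mean-zero complex Gaussian `z` with `E|z|² = A`. -/
def rayleighPDF (A x : ℝ) : ℝ := 2 * x / A * exp (-x ^ 2 / A)

/-- `P(|z| > m)` for the same `z`. -/
def rayleighTail (A m : ℝ) : ℝ := exp (-max m 0 ^ 2 / A)

variable {A B : ℝ}

lemma rayleighPDF_nonneg (hA : 0 ≤ A) {x : ℝ} (hx : 0 ≤ x) : 0 ≤ rayleighPDF A x := by
  unfold rayleighPDF; positivity

lemma hasDerivAt_neg_exp_neg_sq_div (A x : ℝ) :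
    HasDerivAt (fun x => -exp (-x ^ 2 / A)) (rayleighPDF A x) x := by
  have h := (((hasDerivAt_pow 2 x).fun_neg.div_const A).exp).fun_neg
  refine h.congr_deriv ?_
  simp only [rayleighPDF]; push_cast; ring

lemma integrable_rayleighPDF (hA : 0 < A) : Integrable (rayleighPDF A) := by
  have h := (integrable_rpow_mul_exp_neg_mul_sq (inv_pos.2 hA) (s := 1) (by norm_num)).const_mul
    (2 / A)
  refine h.congr (Eventually.of_forall fun x => ?_)
  simp only [rayleighPDF, rpow_one]
  ring_nf

lemma integral_Ioi_rayleighPDF (hA : 0 < A) (m : ℝ) :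
    ∫ x in Ioi m, rayleighPDF A x = exp (-m ^ 2 / A) := by
  have hlim : Tendsto (fun x : ℝ => -exp (-x ^ 2 / A)) atTop (𝓝 0) := by
    have h := (tendsto_pow_atTop two_ne_zero).atTop_div_const hA
    simpa [neg_div] using (Real.tendsto_exp_neg_atTop_nhds_zero.comp h).neg
  rw [integral_Ioi_of_hasDerivAt_of_tendsto
    (hasDerivAt_neg_exp_neg_sq_div A m).continuousAt.continuousWithinAt
    (fun x _ => hasDerivAt_neg_exp_neg_sq_div A x) (integrable_rayleighPDF hA).integrableOn hlim]
  ring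

lemma integral_Ici_inter_Ioi_rayleighPDF (hA : 0 < A) (m : ℝ) :
    ∫ x in Ici 0 ∩ Ioi m, rayleighPDF A x = rayleighTail A m := by
  rw [setIntegral_congr_set (ae_eq_set_inter Ioi_ae_eq_Ici.symm (ae_eq_refl (Ioi m))),
    Ioi_inter_Ioi, integral_Ioi_rayleighPDF hA, rayleighTail, sup_comm]

lemma rayleighTail_nonneg (A m : ℝ) : 0 ≤ rayleighTail A m := (exp_pos _).le

lemma rayleighTail_le_one (hA : 0 ≤ A) (m : ℝ) : rayleighTail A m ≤ 1 :=
  exp_le_one_iff.2 (div_nonpos_of_nonpos_of_nonneg (neg_nonpos.2 (sq_nonneg _)) hA)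

lemma continuous_rayleighTail (A : ℝ) : Continuous (rayleighTail A) := by
  unfold rayleighTail; fun_prop

lemma rayleighTail_of_nonpos (A : ℝ) {m : ℝ} (hm : m ≤ 0) : rayleighTail A m = 1 := by
  simp [rayleighTail, max_eq_right hm]

lemma rayleighTail_of_nonneg (A : ℝ) {m : ℝ} (hm : 0 ≤ m) :
    rayleighTail A m = exp (-m ^ 2 / A) := by
  simp [rayleighTail, max_eq_left hm]

lemma ell1_density_eq_rayleighPDF_mul (A B : ℝ) (p : ℝ × ℝ) :
    4 * p.1 * p.2 / (A * B) * exp (-(p.1 ^ 2) / A - p.2 ^ 2 / B)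
      = rayleighPDF A p.1 * rayleighPDF B p.2 := by
  rw [rayleighPDF, rayleighPDF, sub_eq_add_neg, exp_add, neg_div _ (p.2 ^ 2)]
  ring

lemma indicator_ell1_region (t : ℝ) (f g : ℝ → ℝ) (a b : ℝ) :
    {p : ℝ × ℝ | 0 ≤ p.1 ∧ 0 ≤ p.2 ∧ t < p.1 + p.2}.indicator (fun p => f p.1 * g p.2) (a, b)
      = (Ici 0).indicator f a * (Ici 0 ∩ Ioi (t - a)).indicator g b := by
  simp only [indicator, mem_ofPred_eq, mem_Ici, mem_inter_iff, mem_Ioi, sub_lt_iff_lt_add']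
  split_ifs <;> simp_all

/-- Conditioning on `|α| = a`. -/
theorem setIntegral_ell1_eq_integral_rayleighTail (hA : 0 < A) (hB : 0 < B) (t : ℝ) :
    ∫ p in {p : ℝ × ℝ | 0 ≤ p.1 ∧ 0 ≤ p.2 ∧ t < p.1 + p.2},
        4 * p.1 * p.2 / (A * B) * exp (-(p.1 ^ 2) / A - p.2 ^ 2 / B)
      = ∫ a in Ici 0, rayleighPDF A a * rayleighTail B (t - a) := by
  have hS : MeasurableSet {p : ℝ × ℝ | 0 ≤ p.1 ∧ 0 ≤ p.2 ∧ t < p.1 + p.2} :=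
    (measurableSet_le measurable_const measurable_fst).inter
      ((measurableSet_le measurable_const measurable_snd).inter
        (measurableSet_lt measurable_const (measurable_fst.add measurable_snd)))
  have hint := ((integrable_rayleighPDF hA).mul_prod (integrable_rayleighPDF hB)).indicator hS
  simp_rw [ell1_density_eq_rayleighPDF_mul]
  rw [← integral_indicator hS, Measure.volume_eq_prod, integral_prod _ hint,
    ← integral_indicator measurableSet_Ici]
  simp_rw [indicator_ell1_region, integral_const_mul,
    integral_indicator (measurableSet_Ici.inter measurableSet_Ioi),
    integral_Ici_inter_Ioi_rayleighPDF hB, indicator_mul_left]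

lemma sq_div_add_sq_div_eq (hA : 0 < A) (hB : 0 < B) (t a : ℝ) :
    a ^ 2 / A + (t - a) ^ 2 / B
      = t ^ 2 / (A + B) + (A + B) / (A * B) * (a - t * A / (A + B)) ^ 2 := by
  field_simp
  ring

lemma rayleighPDF_mul_rayleighTail_sub (hA : 0 < A) (hB : 0 < B) {t a : ℝ} (hat : a ≤ t) :
    rayleighPDF A a * rayleighTail B (t - a) = 2 * a / A * exp (-t ^ 2 / (A + B)) *
      exp (-((A + B) / (A * B) * (a - t * A / (A + B)) ^ 2)) := by
  rw [rayleighPDF, rayleighTail_of_nonneg B (sub_nonneg.2 hat), mul_assoc, mul_assoc, ← exp_add,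
    ← exp_add]
  congr 2
  linear_combination -sq_div_add_sq_div_eq hA hB t a

lemma integrable_rayleighPDF_mul_rayleighTail (hA : 0 < A) (hB : 0 ≤ B) (t : ℝ) :
    Integrable fun a => rayleighPDF A a * rayleighTail B (t - a) := by
  refine (integrable_rayleighPDF hA).mul_bdd (c := 1) ?_ (Eventually.of_forall fun a => ?_)
  · exact ((continuous_rayleighTail B).comp (continuous_sub_left t)).aestronglyMeasurable
  · rw [norm_of_nonneg (rayleighTail_nonneg B _)]
    exact rayleighTail_le_one hB _

lemma integral_rayleighPDF_mul_rayleighTail_le (hA : 0 < A) (hB : 0 < B) {t : ℝ} (ht : 0 ≤ t) :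
    ∫ a in Ici 0, rayleighPDF A a * rayleighTail B (t - a)
      ≤ (t ^ 2 / A + 1) * exp (-t ^ 2 / (A + B)) := by
  set E := exp (-t ^ 2 / (A + B))
  have hint := integrable_rayleighPDF_mul_rayleighTail hA hB.le t
  have hnear : ∫ a in Icc 0 t, rayleighPDF A a * rayleighTail B (t - a) ≤ t ^ 2 / A * E :=
    calc ∫ a in Icc 0 t, rayleighPDF A a * rayleighTail B (t - a)
        ≤ ∫ a in Icc 0 t, 2 * a / A * E := by
          refine setIntegral_mono_on hint.integrableOn (by fun_prop : Continuous _).integrableOn_Icc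
            measurableSet_Icc fun a ha => ?_
          rw [rayleighPDF_mul_rayleighTail_sub hA hB ha.2]
          have : 0 ≤ 2 * a / A * E := by have := ha.1; positivity
          exact mul_le_of_le_one_right this (exp_le_one_iff.2 (neg_nonpos.2 (by positivity)))
      _ = t ^ 2 / A * E := by
          rw [integral_Icc_eq_integral_Ioc, ← intervalIntegral.integral_of_le ht,
            show (fun a : ℝ => 2 * a / A * E) = fun a => 2 / A * E * a by ext; ring,
            intervalIntegral.integral_const_mul, integral_id]
          ring
  have hfar : ∫ a in Ioi t, rayleighPDF A a * rayleighTail B (t - a) = exp (-t ^ 2 / A) := by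
    rw [← integral_Ioi_rayleighPDF hA]
    refine setIntegral_congr_fun measurableSet_Ioi fun a ha => ?_
    rw [rayleighTail_of_nonpos B (sub_nonpos.2 (le_of_lt ha)), mul_one]
  have hexp : exp (-t ^ 2 / A) ≤ E := by
    simp only [E, neg_div]
    gcongr
    linarith
  rw [← Icc_union_Ioi_eq_Ici ht, setIntegral_union
    ((Iic_disjoint_Ioi le_rfl).mono_left Icc_subset_Iic_self) measurableSet_Ioi
    hint.integrableOn hint.integrableOn, hfar]
  linarith

lemma le_integral_rayleighPDF_mul_rayleighTail (hA : 0 < A) (hB : 0 < B) {t : ℝ}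
    (ht : (A + B) / B ≤ t) :
    2 * t / (A + B) * exp (-((A + B) / (A * B))) * exp (-t ^ 2 / (A + B))
      ≤ ∫ a in Ici 0, rayleighPDF A a * rayleighTail B (t - a) := by
  set μ := t * A / (A + B)
  have hAB : 0 < A + B := add_pos hA hB
  have ht0 : 0 ≤ t := le_trans (by positivity) ht
  have hμ : 0 ≤ μ := by positivity
  have hμAB : μ * (A + B) = t * A := div_mul_cancel₀ _ hAB.ne'
  have hμt : μ + 1 ≤ t := by
    rw [div_le_iff₀ hB] at ht
    nlinarith
  have hint := integrable_rayleighPDF_mul_rayleighTail hA hB.le t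
  calc 2 * t / (A + B) * exp (-((A + B) / (A * B))) * exp (-t ^ 2 / (A + B))
      = ∫ _ in Icc μ (μ + 1), 2 * t / (A + B) * exp (-((A + B) / (A * B))) *
          exp (-t ^ 2 / (A + B)) := by simp
    _ ≤ ∫ a in Icc μ (μ + 1), rayleighPDF A a * rayleighTail B (t - a) := by
        refine setIntegral_mono_on (integrableOn_const (by simp)) hint.integrableOn
          measurableSet_Icc fun a ha => ?_
        rw [rayleighPDF_mul_rayleighTail_sub hA hB (by linarith [ha.2])]
        have hcoef : 2 * t / (A + B) ≤ 2 * a / A := by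
          rw [div_le_div_iff₀ hAB hA]
          nlinarith [ha.1]
        have hgauss : exp (-((A + B) / (A * B))) ≤ exp (-((A + B) / (A * B) * (a - μ) ^ 2)) := by
          gcongr
          refine mul_le_of_le_one_right (by positivity) ?_
          nlinarith [ha.1, ha.2]
        have ha0 : 0 ≤ 2 * a / A := div_nonneg (by linarith [ha.1]) hA.le
        calc 2 * t / (A + B) * exp (-((A + B) / (A * B))) * exp (-t ^ 2 / (A + B))
            ≤ 2 * a / A * exp (-((A + B) / (A * B) * (a - μ) ^ 2)) * exp (-t ^ 2 / (A + B)) :=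
              mul_le_mul_of_nonneg_right (mul_le_mul hcoef hgauss (exp_pos _).le ha0)
                (exp_pos _).le
          _ = _ := by ring
    _ ≤ ∫ a in Ici 0, rayleighPDF A a * rayleighTail B (t - a) := by
        refine setIntegral_mono_set hint.integrableOn ?_
          ((Icc_subset_Ici_iff (by linarith)).2 hμ).eventuallyLE
        filter_upwards [ae_restrict_mem measurableSet_Ici] with a ha
        exact mul_nonneg (rayleighPDF_nonneg hA.le ha) (rayleighTail_nonneg B _)

end

/-- Quantitative two-sided bounds on the ℓ¹ tail probability
`P(λ) = P(|α| + |β| > z₀ λ)` of two independent mean-zero complex Gaussians. -/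
theorem ell1_tail_bounds (σα σβ z₀ : ℝ) (hσα : 0 < σα) (hσβ : 0 < σβ) (hz₀ : 0 < z₀)
    (P : ℝ → ℝ)
    (hP : ∀ lam : ℝ, P lam =
      ∫ p in {p : ℝ × ℝ | 0 ≤ p.1 ∧ 0 ≤ p.2 ∧ z₀ * lam < p.1 + p.2},
        4 * p.1 * p.2 / (σα ^ 2 * σβ ^ 2) *
          Real.exp (-(p.1 ^ 2) / σα ^ 2 - p.2 ^ 2 / σβ ^ 2)) :
    (∀ lam : ℝ, 0 < lam →
      P lam ≤ (z₀ ^ 2 * lam ^ 2 / σα ^ 2 + 1) *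
        Real.exp (-(z₀ ^ 2 * lam ^ 2) / (σα ^ 2 + σβ ^ 2))) ∧
    ∃ c > 0, ∃ lam₀ > 0, ∀ lam : ℝ, lam₀ ≤ lam →
      c * lam * Real.exp (-(z₀ ^ 2 * lam ^ 2) / (σα ^ 2 + σβ ^ 2)) ≤ P lam := by
  have hA : 0 < σα ^ 2 := by positivity
  have hB : 0 < σβ ^ 2 := by positivity
  simp_rw [hP, setIntegral_ell1_eq_integral_rayleighTail hA hB, ← mul_pow]
  refine ⟨fun lam hlam => integral_rayleighPDF_mul_rayleighTail_le hA hB (by positivity), ?_⟩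
  refine ⟨2 * z₀ / (σα ^ 2 + σβ ^ 2) * exp (-((σα ^ 2 + σβ ^ 2) / (σα ^ 2 * σβ ^ 2))),
    by positivity, (σα ^ 2 + σβ ^ 2) / σβ ^ 2 / z₀, by positivity, fun lam hlam => ?_⟩
  have ht : (σα ^ 2 + σβ ^ 2) / σβ ^ 2 ≤ z₀ * lam := by
    rw [mul_comm]; exact (div_le_iff₀ hz₀).1 hlam
  calc _ = 2 * (z₀ * lam) / (σα ^ 2 + σβ ^ 2) * exp (-((σα ^ 2 + σβ ^ 2) / (σα ^ 2 * σβ ^ 2))) *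
        exp (-(z₀ * lam) ^ 2 / (σα ^ 2 + σβ ^ 2)) := by ring
    _ ≤ _ := le_integral_rayleighPDF_mul_rayleighTail hA hB ht
end

section
/- Define h : ℝ → ℝ by h(ξ) = |cos ξ| + |sin ξ|. Fix λ > 0. Then for every τ ∈ [0, π/(4λ²)) there is exactly one y ≥ 0 with y · h(2τy²) = λ, and the resulting function τ ↦ y(τ) is continuously differentiable on the open interval (0, π/(4λ²)). -/
/-!
Put `s = 2τy²`. A solution satisfies `y · h(s) = λ`, hence `ψ(s) := s · h(s)² = 2λ²τ`.
Since `h(s)² = 1 + |sin 2s|`, `ψ` increases strictly from `0` to `π/2` on `[0, π/4]`, while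
`ψ ≥ π/2` on `[π/4, ∞)` (on `[π/4, π/2]` by Jordan's inequality `sin x ≥ 2x/π`). So for
`2λ²τ < π/2` the only candidate is `s = ψ⁻¹(2λ²τ) ∈ [0, π/4)`, and it does give the
solution `y = λ / h(s)`. As `ψ' > 0` on `(0, π/4)`, the inverse function theorem makes `ψ⁻¹`,
hence `y`, `C¹`.
-/

open Real

noncomputable def h (ξ : ℝ) : ℝ := |Real.cos ξ| + |Real.sin ξ|

open Set

theorem contDiffOn_one_of_invOn {f g : ℝ → ℝ} {s t : Set ℝ} (hs : IsOpen s) (ht : IsOpen t)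
    (hf : ContDiffOn ℝ 1 f t) (hf' : ∀ x ∈ t, deriv f x ≠ 0) (hinv : InvOn g f t s)
    (hg : MapsTo g s t) : ContDiffOn ℝ 1 g s := by
  have hderiv : ∀ c ∈ s, HasDerivAt g (deriv f (g c))⁻¹ c := by
    intro c hc
    have hgc := ht.mem_nhds (hg hc)
    have hstrict := (hf.contDiffAt hgc).hasStrictDerivAt one_ne_zero
    have := hstrict.to_local_left_inverse (hf' _ (hg hc)) (Filter.eventually_of_mem hgc hinv.1)
    rw [hinv.2 hc] at this
    exact this.hasDerivAt
  have hgc : ContinuousOn g s := fun c hc => (hderiv c hc).continuousAt.continuousWithinAt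
  rw [contDiffOn_one_iff_derivWithin hs.uniqueDiffOn]
  refine ⟨fun c hc => (hderiv c hc).differentiableAt.differentiableWithinAt, ?_⟩
  refine (((hf.continuousOn_deriv_of_isOpen ht le_rfl).comp hgc hg).inv₀
    fun c hc => hf' _ (hg hc)).congr fun c hc => ?_
  rw [derivWithin_of_isOpen hs hc, (hderiv c hc).deriv]
  rfl

theorem h_nonneg (ξ : ℝ) : 0 ≤ h ξ := by unfold h; positivity

theorem h_sq (ξ : ℝ) : h ξ ^ 2 = 1 + |sin (2 * ξ)| := by
  rw [h, sin_two_mul, abs_mul, abs_mul, abs_two, ← sin_sq_add_cos_sq ξ, ← sq_abs (sin ξ),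
    ← sq_abs (cos ξ)]
  ring

theorem one_le_h (ξ : ℝ) : 1 ≤ h ξ := by
  nlinarith [h_sq ξ, h_nonneg ξ, abs_nonneg (sin (2 * ξ))]

theorem h_pos (ξ : ℝ) : 0 < h ξ := one_pos.trans_le (one_le_h ξ)

theorem h_eq_cos_add_sin {ξ : ℝ} (hξ : ξ ∈ Icc 0 (π / 2)) : h ξ = cos ξ + sin ξ := by
  rw [h, abs_of_nonneg (cos_nonneg_of_mem_Icc ⟨by linarith [pi_pos, hξ.1], hξ.2⟩),
    abs_of_nonneg (sin_nonneg_of_nonneg_of_le_pi hξ.1 (by linarith [pi_pos, hξ.2]))]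

theorem contDiffOn_h : ContDiffOn ℝ ⊤ h (Ioo 0 (π / 2)) :=
  (contDiff_cos.add contDiff_sin).contDiffOn.congr fun _ hξ =>
    h_eq_cos_add_sin (Ioo_subset_Icc_self hξ)

noncomputable def psi (s : ℝ) : ℝ := s * h s ^ 2

theorem continuous_psi : Continuous psi := by
  unfold psi h; fun_prop

theorem psi_eq {s : ℝ} (hs : s ∈ Icc 0 (π / 2)) : psi s = s * (1 + sin (2 * s)) := by
  rw [psi, h_sq,
    abs_of_nonneg (sin_nonneg_of_nonneg_of_le_pi (by linarith [hs.1]) (by linarith [hs.2]))]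

theorem psi_zero : psi 0 = 0 := by simp [psi]

theorem psi_pi_div_four : psi (π / 4) = π / 2 := by
  rw [psi_eq ⟨by positivity, by linarith [pi_pos]⟩, show 2 * (π / 4) = π / 2 by ring,
    sin_pi_div_two]
  ring

theorem strictMonoOn_psi : StrictMonoOn psi (Icc 0 (π / 4)) := by
  intro a ha b hb hab
  have hsin : sin (2 * a) ≤ sin (2 * b) :=
    sin_le_sin_of_le_of_le_pi_div_two (by linarith [pi_pos, ha.1]) (by linarith [hb.2])
      (by linarith)
  have hsa : 0 ≤ sin (2 * a) :=
    sin_nonneg_of_nonneg_of_le_pi (by linarith [ha.1]) (by linarith [ha.2, pi_pos])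
  rw [psi_eq ⟨ha.1, by linarith [ha.2, pi_pos]⟩,
    psi_eq ⟨by linarith [ha.1], by linarith [hb.2, pi_pos]⟩]
  nlinarith [ha.1]

theorem pi_div_two_le_psi {s : ℝ} (hs : π / 4 ≤ s) : π / 2 ≤ psi s := by
  rcases le_total s (π / 2) with hs2 | hs2
  · have hjordan := mul_le_sin (x := π - 2 * s) (by linarith) (by linarith)
    rw [sin_pi_sub] at hjordan
    rw [psi_eq ⟨by linarith [pi_pos], hs2⟩]
    have hquad :
        s * (1 + 2 / π * (π - 2 * s)) - π / 2 = 4 / π * ((s - π / 4) * (π / 2 - s)) := by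
      field_simp
      ring
    calc π / 2 ≤ s * (1 + 2 / π * (π - 2 * s)) := by
          rw [← sub_nonneg, hquad]
          exact mul_nonneg (by positivity) (mul_nonneg (by linarith) (by linarith))
      _ ≤ s * (1 + sin (2 * s)) := by gcongr; linarith [pi_pos]
  · exact hs2.trans (le_mul_of_one_le_right (by linarith [pi_pos]) (one_le_pow₀ (one_le_h s)))

theorem contDiffOn_psi : ContDiffOn ℝ ⊤ psi (Ioo 0 (π / 2)) :=
  (contDiff_id.mul (contDiff_const.add (contDiff_sin.comp (contDiff_const.mul contDiff_id))))
    |>.contDiffOn.congr fun _ hs => psi_eq (Ioo_subset_Icc_self hs)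

theorem hasDerivAt_psi {s : ℝ} (hs : s ∈ Ioo 0 (π / 2)) :
    HasDerivAt psi (1 + sin (2 * s) + 2 * s * cos (2 * s)) s := by
  have hφ : HasDerivAt (fun x => x * (1 + sin (2 * x)))
      (1 + sin (2 * s) + 2 * s * cos (2 * s)) s :=
    ((hasDerivAt_id' s).mul (((hasDerivAt_id' s).const_mul 2).sin.const_add 1)).congr_deriv
      (by ring)
  exact hφ.congr_of_eventuallyEq (Filter.eventually_of_mem (isOpen_Ioo.mem_nhds hs)
    fun _ hx => psi_eq (Ioo_subset_Icc_self hx))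

theorem deriv_psi_pos {s : ℝ} (hs : s ∈ Ioo 0 (π / 4)) : 0 < deriv psi s := by
  rw [(hasDerivAt_psi ⟨hs.1, by linarith [hs.2, pi_pos]⟩).deriv]
  have hsin : 0 ≤ sin (2 * s) :=
    sin_nonneg_of_nonneg_of_le_pi (by linarith [hs.1]) (by linarith [hs.2, pi_pos])
  have hcos : 0 ≤ cos (2 * s) :=
    cos_nonneg_of_mem_Icc ⟨by linarith [hs.1, pi_pos], by linarith [hs.2]⟩
  have hs0 := hs.1
  positivity

theorem bijOn_psi : BijOn psi (Icc 0 (π / 4)) (Icc 0 (π / 2)) := by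
  have h0 : (0 : ℝ) ∈ Icc 0 (π / 4) := left_mem_Icc.2 (by positivity)
  have h1 : π / 4 ∈ Icc 0 (π / 4) := right_mem_Icc.2 (by positivity)
  rw [show Icc (0 : ℝ) (π / 2) = Icc (psi 0) (psi (π / 4)) by rw [psi_zero, psi_pi_div_four]]
  refine ⟨fun s hs => ⟨strictMonoOn_psi.monotoneOn h0 hs hs.1,
    strictMonoOn_psi.monotoneOn hs h1 hs.2⟩, strictMonoOn_psi.injOn,
    continuous_psi.continuousOn.surjOn_Icc h0 h1⟩

noncomputable def psiInv : ℝ → ℝ := Function.invFunOn psi (Icc 0 (π / 4))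

theorem invOn_psiInv : InvOn psiInv psi (Icc 0 (π / 4)) (Icc 0 (π / 2)) :=
  bijOn_psi.invOn_invFunOn

theorem mapsTo_psiInv : MapsTo psiInv (Icc 0 (π / 2)) (Icc 0 (π / 4)) :=
  bijOn_psi.surjOn.mapsTo_invFunOn

theorem mapsTo_psiInv_Ioo : MapsTo psiInv (Ioo 0 (π / 2)) (Ioo 0 (π / 4)) := by
  intro c hc
  have hmem := mapsTo_psiInv (Ioo_subset_Icc_self hc)
  have hψ : psi (psiInv c) = c := invOn_psiInv.2 (Ioo_subset_Icc_self hc)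
  refine ⟨hmem.1.lt_of_ne ?_, hmem.2.lt_of_ne ?_⟩
  · rintro h0
    rw [← h0, psi_zero] at hψ
    exact hc.1.ne hψ
  · rintro h1
    rw [h1, psi_pi_div_four] at hψ
    exact hc.2.ne' hψ

theorem contDiffOn_psiInv : ContDiffOn ℝ 1 psiInv (Ioo 0 (π / 2)) :=
  contDiffOn_one_of_invOn isOpen_Ioo isOpen_Ioo
    ((contDiffOn_psi.of_le le_top).mono (Ioo_subset_Ioo_right (by linarith [pi_pos])))
    (fun _ hs => (deriv_psi_pos hs).ne')
    (invOn_psiInv.mono Ioo_subset_Icc_self Ioo_subset_Icc_self) mapsTo_psiInv_Ioo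

theorem mul_h_eq_iff {lam τ y : ℝ} (hτ : 0 ≤ τ) (hc : 2 * lam ^ 2 * τ < π / 2) :
    y * h (2 * τ * y ^ 2) = lam ↔ y = lam / h (psiInv (2 * lam ^ 2 * τ)) := by
  have hc' : 2 * lam ^ 2 * τ ∈ Icc 0 (π / 2) := ⟨by positivity, hc.le⟩
  set σ := psiInv (2 * lam ^ 2 * τ)
  have hσ : σ ∈ Icc 0 (π / 4) := mapsTo_psiInv hc'
  have hψσ : σ * h σ ^ 2 = 2 * lam ^ 2 * τ := invOn_psiInv.2 hc'
  constructor
  · intro hy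
    have hψ : psi (2 * τ * y ^ 2) = 2 * lam ^ 2 * τ := by
      rw [psi, ← hy]
      ring
    have hs : 2 * τ * y ^ 2 ∈ Icc 0 (π / 4) :=
      ⟨by positivity, (lt_of_not_ge fun hle => (pi_div_two_le_psi hle).not_gt (hψ ▸ hc)).le⟩
    rw [← strictMonoOn_psi.injOn hs hσ (hψ.trans (invOn_psiInv.2 hc').symm),
      eq_div_iff (h_pos _).ne', hy]
  · rintro rfl
    have harg : 2 * τ * (lam / h σ) ^ 2 = σ := by
      field_simp [(h_pos σ).ne']
      linarith
    rw [harg, div_mul_cancel₀ _ (h_pos σ).ne']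

theorem contDiffOn_div_h_psiInv (lam : ℝ) :
    ContDiffOn ℝ 1 (fun c => lam / h (psiInv c)) (Ioo 0 (π / 2)) :=
  contDiffOn_const.div ((contDiffOn_h.of_le le_top).comp contDiffOn_psiInv
    (mapsTo_psiInv_Ioo.mono_right (Ioo_subset_Ioo_right (by linarith [pi_pos]))))
    fun _ _ => (h_pos _).ne'

/-- Before the first birth time `π/(4λ²)`, the implicit equation `y · h(2τy²) = λ` has
exactly one nonnegative solution `y(τ)`, and `τ ↦ y(τ)` is `C¹` on `(0, π/(4λ²))`. -/
theorem implicit_solution_unique_C1 (lam : ℝ) (hlam : 0 < lam) :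
    ∃ y : ℝ → ℝ,
      (∀ τ ∈ Set.Ico (0 : ℝ) (π / (4 * lam ^ 2)),
        (0 ≤ y τ ∧ y τ * h (2 * τ * (y τ) ^ 2) = lam) ∧
        ∀ y' : ℝ, 0 ≤ y' → y' * h (2 * τ * y' ^ 2) = lam → y' = y τ) ∧
      ContDiffOn ℝ 1 y (Set.Ioo (0 : ℝ) (π / (4 * lam ^ 2))) := by
  have hc : ∀ τ, τ < π / (4 * lam ^ 2) → 2 * lam ^ 2 * τ < π / 2 := fun τ hτ => by
    rw [lt_div_iff₀ (by positivity)] at hτ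
    linarith
  refine ⟨fun τ => lam / h (psiInv (2 * lam ^ 2 * τ)), fun τ hτ => ?_, ?_⟩
  · have hiff := fun y => mul_h_eq_iff (y := y) hτ.1 (hc τ hτ.2)
    exact ⟨⟨div_nonneg hlam.le (h_nonneg _), (hiff _).2 rfl⟩, fun y' _ => (hiff y').1⟩
  · exact (contDiffOn_div_h_psiInv lam).comp (contDiff_const.mul contDiff_id).contDiffOn
      fun τ hτ => ⟨by have := hτ.1; positivity, hc τ hτ.2⟩
end
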